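/- arXiv:1609.05767 — 2 statements merged into one kernel-verified Lean document; each statement's English description precedes it below -/
import Mathlib

section
/- Let [s i, f i], i ∈ Fin k, be a finite family of closed real intervals with s i ≤ f i, and suppose that at every time t ∈ ℝ the number of indices i with t ∈ [s i, f i] is at most g (a capacity constraint with g ≥ 1). Then the sum of the interval lengths is at most g times the Lebesgue measure of the union: ∑ i, (f i − s i) ≤ g · volume(⋃ i, [s i, f i]). -/
open MeasureTheory ENNReal
open scoped Finset

/-!
Integrate the counting function `t ↦ #{i | t ∈ A i}`: its integral is the sum of the measures of
the `A i`, and under the capacity constraint it is bounded pointwise by `g` times the indicator of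
the union, whose integral is `g` times the measure of the union.
-/

section Overlap

variable {α ι : Type*} [Fintype ι]

theorem Set.sum_indicator_one_eq_card_filter (A : ι → Set α) (x : α)
    [DecidablePred (x ∈ A ·)] :
    ∑ i, (A i).indicator (fun _ ↦ (1 : ℝ≥0∞)) x = #{i | x ∈ A i} := by
  simp only [Set.indicator_apply, Finset.sum_boole]

theorem Set.sum_indicator_one_le_indicator_iUnion {A : ι → Set α}
    [∀ x, DecidablePred (x ∈ A ·)] {g : ℕ}
    (hcap : ∀ x, #{i | x ∈ A i} ≤ g) (x : α) :
    ∑ i, (A i).indicator (fun _ ↦ (1 : ℝ≥0∞)) x ≤ (⋃ i, A i).indicator (fun _ ↦ (g : ℝ≥0∞)) x := by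
  by_cases hx : x ∈ ⋃ i, A i
  · rw [Set.indicator_of_mem hx, Set.sum_indicator_one_eq_card_filter]
    exact_mod_cast hcap x
  · have hxA : ∀ i, x ∉ A i := fun i hi ↦ hx (Set.mem_iUnion_of_mem i hi)
    simp [Set.indicator_of_notMem (hxA _)]

theorem MeasureTheory.sum_measure_le_mul_measure_iUnion [MeasurableSpace α] (μ : Measure α)
    {A : ι → Set α} [∀ x, DecidablePred (x ∈ A ·)] (hA : ∀ i, NullMeasurableSet (A i) μ) {g : ℕ}
    (hcap : ∀ x, #{i | x ∈ A i} ≤ g) :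
    ∑ i, μ (A i) ≤ g * μ (⋃ i, A i) :=
  calc ∑ i, μ (A i)
      = ∫⁻ x, ∑ i, (A i).indicator (fun _ ↦ (1 : ℝ≥0∞)) x ∂μ := by
        rw [lintegral_finsetSum' _ fun i _ ↦ (aemeasurable_indicator_const_iff 1).2 (hA i)]
        simp only [lintegral_indicator_fun_one₀ (hA _)]
    _ ≤ ∫⁻ x, (⋃ i, A i).indicator (fun _ ↦ (g : ℝ≥0∞)) x ∂μ :=
        lintegral_mono (Set.sum_indicator_one_le_indicator_iUnion hcap)
    _ = g * μ (⋃ i, A i) := lintegral_indicator_const₀ (NullMeasurableSet.iUnion hA) _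

end Overlap

theorem sum_len_le_g_mul_volume_iUnion_general
    (k g : ℕ) (s f : Fin k → ℝ) (hsf : ∀ i, s i ≤ f i)
    (hcap : ∀ t : ℝ,
      (Finset.univ.filter (fun i : Fin k => t ∈ Set.Icc (s i) (f i))).card ≤ g) :
    ENNReal.ofReal (∑ i : Fin k, (f i - s i))
      ≤ (g : ENNReal) * volume (⋃ i : Fin k, Set.Icc (s i) (f i)) := by
  have hlen : ENNReal.ofReal (∑ i, (f i - s i)) = ∑ i, volume (Set.Icc (s i) (f i)) := by
    rw [ENNReal.ofReal_sum_of_nonneg fun i _ ↦ sub_nonneg.2 (hsf i)]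
    simp only [Real.volume_Icc]
  rw [hlen]
  exact sum_measure_le_mul_measure_iUnion volume (fun _ ↦ measurableSet_Icc.nullMeasurableSet) hcap

/-- If at every time `t` at most `g` of the intervals `[s i, f i]` contain `t`,
then the sum of the interval lengths is at most `g` times the Lebesgue measure
of their union. -/
theorem sum_len_le_g_mul_volume_iUnion
    (k g : ℕ) (hg : 1 ≤ g) (s f : Fin k → ℝ) (hsf : ∀ i, s i ≤ f i)
    (hcap : ∀ t : ℝ,
      (Finset.univ.filter (fun i : Fin k => t ∈ Set.Icc (s i) (f i))).card ≤ g) :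
    ENNReal.ofReal (∑ i : Fin k, (f i - s i))
      ≤ (g : ENNReal) * volume (⋃ i : Fin k, Set.Icc (s i) (f i)) :=
  sum_len_le_g_mul_volume_iUnion_general k g s f hsf hcap
end

section
/- (Capacity bound.) For any finite family of jobs [s i, f i], i ∈ Fin n, with s i ≤ f i, and any schedule σ : Fin n → Fin m satisfying the capacity constraint g ≥ 1 (for every time t ∈ ℝ and every machine j, at most g jobs i with σ i = j satisfy t ∈ [s i, f i]), the cost of σ is at least len(J)/g; equivalently, len(J) = ∑ i, (f i − s i) ≤ g · (∑ j, volume(⋃ {[s i, f i] : σ i = j})). In particular OPT(J, g) ≥ len(J)/g. -/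
/-!
Integrating the pointwise count of jobs of machine `j` running at time `t` gives the total length
of those jobs. By the capacity constraint that count is at most `g` on the busy set of `j`,
and zero off it, so the integral is at most `g` times the busy time of `j`.
-/

open MeasureTheory
open scoped Finset

lemma ENNReal.ofReal_sum_le {ι : Type*} (t : Finset ι) (a : ι → ℝ) :
    ENNReal.ofReal (∑ i ∈ t, a i) ≤ ∑ i ∈ t, ENNReal.ofReal (a i) :=
  Finset.le_sum_of_subadditive _ ENNReal.ofReal_zero.le (fun _ _ => ENNReal.ofReal_add_le) t a

lemma sum_indicator_one_le_mul_indicator_biUnion {α ι : Type*} (t : Finset ι) (A : ι → Set α)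
    [∀ i, DecidablePred (· ∈ A i)] (g : ℕ) (x : α) (hx : #{i ∈ t | x ∈ A i} ≤ g) :
    ∑ i ∈ t, (A i).indicator (1 : α → ENNReal) x
      ≤ g * (⋃ i ∈ t, A i).indicator 1 x := by
  have hcount : ∑ i ∈ t, (A i).indicator (1 : α → ENNReal) x = #{i ∈ t | x ∈ A i} := by
    simp only [Set.indicator_apply, Pi.one_apply, Finset.sum_boole]
  rw [hcount]
  by_cases hU : x ∈ ⋃ i ∈ t, A i
  · rw [Set.indicator_of_mem hU, Pi.one_apply, mul_one]
    exact_mod_cast hx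
  · have hempty : {i ∈ t | x ∈ A i} = ∅ :=
      Finset.filter_eq_empty_iff.mpr fun i hi hxi => hU (Set.mem_biUnion hi hxi)
    simp [hempty]

lemma sum_measure_le_mul_measure_biUnion {α ι : Type*} [MeasurableSpace α] (μ : Measure α)
    (t : Finset ι) (A : ι → Set α)
    [∀ i, DecidablePred (· ∈ A i)] (hA : ∀ i ∈ t, MeasurableSet (A i)) (g : ℕ)
    (hmult : ∀ x, #{i ∈ t | x ∈ A i} ≤ g) :
    ∑ i ∈ t, μ (A i) ≤ g * μ (⋃ i ∈ t, A i) := by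
  have hU : MeasurableSet (⋃ i ∈ t, A i) := Finset.measurableSet_biUnion t hA
  calc ∑ i ∈ t, μ (A i)
      = ∫⁻ x, ∑ i ∈ t, (A i).indicator 1 x ∂μ := by
        rw [lintegral_finsetSum _ fun i hi => measurable_one.indicator (hA i hi)]
        exact Finset.sum_congr rfl fun i hi => (lintegral_indicator_one (hA i hi)).symm
    _ ≤ ∫⁻ x, g * (⋃ i ∈ t, A i).indicator 1 x ∂μ :=
        lintegral_mono fun x => sum_indicator_one_le_mul_indicator_biUnion t A g x (hmult x)
    _ = g * μ (⋃ i ∈ t, A i) := by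
        rw [lintegral_const_mul _ (measurable_one.indicator hU), lintegral_indicator_one hU]

theorem len_le_g_mul_cost_general
    (n m g : ℕ) (s f : Fin n → ℝ)
    (σ : Fin n → Fin m)
    (hcap : ∀ t : ℝ, ∀ j : Fin m,
      (Finset.univ.filter
        (fun i : Fin n => σ i = j ∧ t ∈ Set.Icc (s i) (f i))).card ≤ g) :
    ENNReal.ofReal (∑ i : Fin n, (f i - s i))
      ≤ (g : ENNReal) *
          ∑ j : Fin m, volume (⋃ i ∈ {i : Fin n | σ i = j}, Set.Icc (s i) (f i)) := by
  have hmachine : ∀ j : Fin m,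
      ∑ i ∈ {i | σ i = j}, volume (Set.Icc (s i) (f i))
        ≤ g * volume (⋃ i ∈ {i : Fin n | σ i = j}, Set.Icc (s i) (f i)) := by
    intro j
    have hmult : ∀ t : ℝ, #{i ∈ {i | σ i = j} | t ∈ Set.Icc (s i) (f i)} ≤ g := fun t => by
      simpa only [Finset.filter_filter] using hcap t j
    simpa using sum_measure_le_mul_measure_biUnion volume _ _
      (fun i _ => measurableSet_Icc) g hmult
  calc ENNReal.ofReal (∑ i : Fin n, (f i - s i))
      ≤ ∑ i : Fin n, volume (Set.Icc (s i) (f i)) := by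
        simpa only [Real.volume_Icc] using ENNReal.ofReal_sum_le _ _
    _ = ∑ j : Fin m, ∑ i ∈ {i | σ i = j}, volume (Set.Icc (s i) (f i)) :=
        (Finset.sum_fiberwise _ σ _).symm
    _ ≤ g * ∑ j : Fin m, volume (⋃ i ∈ {i : Fin n | σ i = j}, Set.Icc (s i) (f i)) := by
        rw [Finset.mul_sum]
        exact Finset.sum_le_sum fun j _ => hmachine j

/-- Capacity bound: if schedule `σ` puts at most `g` overlapping jobs on each
machine at any time, then `len(J) ≤ g · cost(σ)`. -/
theorem len_le_g_mul_cost
    (n m g : ℕ) (hg : 1 ≤ g) (s f : Fin n → ℝ) (hsf : ∀ i, s i ≤ f i)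
    (σ : Fin n → Fin m)
    (hcap : ∀ t : ℝ, ∀ j : Fin m,
      (Finset.univ.filter
        (fun i : Fin n => σ i = j ∧ t ∈ Set.Icc (s i) (f i))).card ≤ g) :
    ENNReal.ofReal (∑ i : Fin n, (f i - s i))
      ≤ (g : ENNReal) *
          ∑ j : Fin m, volume (⋃ i ∈ {i : Fin n | σ i = j}, Set.Icc (s i) (f i)) :=
  len_le_g_mul_cost_general n m g s f σ hcap
end
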